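/- arXiv:0906.1191 — 2 statements merged into one kernel-verified Lean document; each statement's English description precedes it below -/
import Mathlib

section
/- Let a, b be positive integers with a < b and gcd(a,b) = 1. For every n ∈ ℤ, the column col_n(C_{a, b mod a}) is nonempty if and only if |col_n(S_{a,b})| = (b div a) + 1 (i.e. if and only if column n of S_{a,b} is long). -/
/-- Membership of a lattice point `z` in the half-plane
`H^σ_{a,b,r} = {x ∈ ℝ² : 0 ≤ σ·((b/a)·x₁ − x₂ + r)}`. -/
def inH (a b σ : ℤ) (r : ℝ) (z : ℤ × ℤ) : Prop :=
  0 ≤ (σ : ℝ) * ((b : ℝ) / (a : ℝ) * (z.1 : ℝ) - (z.2 : ℝ) + r)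

/-- The staircase `S^σ_{a,b,r}`. -/
def stair (a b σ : ℤ) (r : ℝ) : Set (ℤ × ℤ) :=
  {z | inH a b σ r z ∧
    (¬ inH a b σ r (z.1 - σ, z.2) ∨ ¬ inH a b σ r (z.1, z.2 + σ))}

/-- The set of corners `C^σ_{a,b,r}`. -/
def corner (a b σ : ℤ) (r : ℝ) : Set (ℤ × ℤ) :=
  {z | inH a b σ r z ∧
    (¬ inH a b σ r (z.1 - σ, z.2) ∧ ¬ inH a b σ r (z.1, z.2 + σ))}

/-- The column `col_x(A)` of a set `A ⊆ ℤ²`. -/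
def col (x : ℤ) (A : Set (ℤ × ℤ)) : Set (ℤ × ℤ) := {p ∈ A | p.1 = x}

/-
With `q = b div a` and `s = b mod a`, column `n` of `S_{a,b}` consists of the heights in
`(⌊b(n-1)/a⌋, ⌊bn/a⌋]`; this uses `a ≤ b`, under which every staircase point `z` already
has `z - e₁ ∉ H`. Since `b = qa + s`, it has `q + (⌊sn/a⌋ - ⌊s(n-1)/a⌋)` points, and the bracket is
`0` or `1` because `0 ≤ s < a`. A corner of `C_{a,s}` in column `n` can only sit at height
`⌊sn/a⌋`, and it does exactly when `⌊s(n-1)/a⌋ < ⌊sn/a⌋`.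
-/

namespace Int

lemma mul_ediv_sub_mul_sub_one_ediv (a b n : ℤ) (ha : a ≠ 0) :
    b * n / a - b * (n - 1) / a = b / a + (b % a * n / a - b % a * (n - 1) / a) := by
  have split (k : ℤ) : b * k / a = b / a * k + b % a * k / a := by
    conv_lhs => rw [← emod_add_mul_ediv b a]
    rw [add_mul, mul_assoc, add_mul_ediv_left _ _ ha, add_comm]
  rw [split n, split (n - 1)]
  ring

lemma mul_sub_one_ediv_le_mul_ediv {a s : ℤ} (ha : 0 < a) (hs : 0 ≤ s) (n : ℤ) :
    s * (n - 1) / a ≤ s * n / a :=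
  Int.ediv_le_ediv ha (by nlinarith)

lemma mul_ediv_le_mul_sub_one_ediv_add_one {a s : ℤ} (ha : 0 < a) (hsa : s ≤ a) (n : ℤ) :
    s * n / a ≤ s * (n - 1) / a + 1 :=
  calc s * n / a ≤ (s * (n - 1) + 1 * a) / a := Int.ediv_le_ediv ha (by linarith)
    _ = s * (n - 1) / a + 1 := add_mul_ediv_right _ _ ha.ne'

end Int

lemma col_eq_image (n : ℤ) (A : Set (ℤ × ℤ)) : col n A = Prod.mk n '' {y | (n, y) ∈ A} := by
  ext ⟨x, y⟩
  simp only [col, Set.mem_ofPred_eq, Set.mem_image, Prod.mk.injEq]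
  constructor
  · rintro ⟨h, rfl⟩
    exact ⟨y, h, rfl, rfl⟩
  · rintro ⟨y, h, rfl, rfl⟩
    exact ⟨h, rfl⟩

lemma ncard_col (n : ℤ) (A : Set (ℤ × ℤ)) : (col n A).ncard = {y | (n, y) ∈ A}.ncard := by
  rw [col_eq_image, Set.ncard_image_of_injective _ (Prod.mk_right_injective n)]

section Staircase

variable {a c : ℤ}

lemma inH_one_zero_iff (ha : 0 < a) {z : ℤ × ℤ} : inH a c 1 0 z ↔ a * z.2 ≤ c * z.1 := by
  have ha' : (0 : ℝ) < a := by exact_mod_cast ha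
  simp only [inH, Int.cast_one, one_mul, add_zero, sub_nonneg, div_mul_eq_mul_div,
    le_div_iff₀ ha', mul_comm (z.2 : ℝ)]
  exact_mod_cast Iff.rfl

lemma mk_mem_corner_iff (ha : 0 < a) {x y : ℤ} :
    (x, y) ∈ corner a c 1 0 ↔ c * (x - 1) / a < y ∧ y = c * x / a := by
  simp only [corner, Set.mem_ofPred_eq, inH_one_zero_iff ha, not_le]
  rw [Int.ediv_lt_iff_lt_mul ha, le_antisymm_iff, Int.le_ediv_iff_mul_le ha,
    Int.ediv_le_iff_le_mul ha]
  constructor <;> rintro ⟨h1, h2, h3⟩ <;> exact ⟨by linarith, by linarith, by linarith⟩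

lemma col_corner_nonempty_iff (ha : 0 < a) (n : ℤ) :
    (col n (corner a c 1 0)).Nonempty ↔ c * (n - 1) / a < c * n / a := by
  rw [col_eq_image, Set.image_nonempty]
  simp only [Set.Nonempty, Set.mem_ofPred_eq, mk_mem_corner_iff ha, exists_eq_right]

lemma mk_mem_stair_iff (ha : 0 < a) (hac : a ≤ c) {x y : ℤ} :
    (x, y) ∈ stair a c 1 0 ↔ y ∈ Set.Ioc (c * (x - 1) / a) (c * x / a) := by
  simp only [stair, Set.mem_ofPred_eq, inH_one_zero_iff ha, not_le, Set.mem_Ioc]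
  rw [Int.ediv_lt_iff_lt_mul ha, Int.le_ediv_iff_mul_le ha]
  constructor
  · rintro ⟨h, h1 | h1⟩ <;> constructor <;> linarith
  · rintro ⟨h1, h2⟩
    exact ⟨by linarith, Or.inl (by linarith)⟩

lemma ncard_col_stair (ha : 0 < a) (hac : a ≤ c) (n : ℤ) :
    ((col n (stair a c 1 0)).ncard : ℤ) = c * n / a - c * (n - 1) / a := by
  have := Int.mul_sub_one_ediv_le_mul_ediv ha (ha.le.trans hac) n
  simp only [ncard_col, mk_mem_stair_iff ha hac, Set.ofPred_mem_eq, ← Finset.coe_Ioc,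
    Set.ncard_coe_finset, Int.card_Ioc]
  omega

end Staircase

theorem stmt10_general (a b : ℤ) (ha : 0 < a) (hab : a < b) :
    ∀ n : ℤ, (col n (corner a (b % a) 1 0)).Nonempty ↔
      ((col n (stair a b 1 0)).ncard : ℤ) = b / a + 1 := by
  intro n
  rw [col_corner_nonempty_iff ha, ncard_col_stair ha hab.le,
    Int.mul_ediv_sub_mul_sub_one_ediv a b n ha.ne']
  have hlow := Int.mul_sub_one_ediv_le_mul_ediv ha (Int.emod_nonneg b ha.ne') n
  have hhigh := Int.mul_ediv_le_mul_sub_one_ediv_add_one ha (Int.emod_lt_of_pos b ha).le n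
  omega

theorem stmt10 (a b : ℤ) (ha : 0 < a) (hab : a < b) (hg : Int.gcd a b = 1) :
    ∀ n : ℤ, (col n (corner a (b % a) 1 0)).Nonempty ↔
      ((col n (stair a b 1 0)).ncard : ℤ) = b / a + 1 :=
  stmt10_general a b ha hab
end

section
/- Let n ≥ 2 and a, b be integers with 0 ≤ a, b ≤ n − 1, and suppose the tetrahedron T_{a,b,n} is empty. Set c = n − a − b + 1. Then for every integer k with 2 ≤ k ≤ n − 1, B_{n,a}(k) + B_{n,b}(k) + B_{n,c}(k) = 1. -/
/-!
For `0 < h < n` the slice of `T_{a,b,n}` at height `h` is the triangle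
`x ≥ ha/n, y ≥ hb/n, x + y ≤ h(a+b)/n + 1 - h/n`. It contains the lattice point
`(⌈ha/n⌉, ⌈hb/n⌉, h)` as soon as the residues of `-ha` and `-hb` modulo `n` sum to at most
`n - h`, so emptiness forces them to sum to more. Using this at the heights `n - k` and `k`,
with `-(n - k)a ≡ ka` and `(m mod n) + (-m mod n) ≤ n`, traps the residues `u, v` of `ak, bk`
in `k < u + v ≤ n + k`, which is exactly `⌊ak/n⌋ + ⌊bk/n⌋ + ⌊ck/n⌋ = k - 1` for `0 < k < n`.
The Beatty sum is the difference of two consecutive instances of this identity.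
-/

/-- The Beatty sequence `B_{a,b}(n) = ⌊b·n/a⌋ − ⌊b·(n−1)/a⌋`. -/
def beatty (a b n : ℤ) : ℤ := ⌊(b * n : ℚ) / a⌋ - ⌊(b * (n - 1) : ℚ) / a⌋

theorem mem_convexHull_tetrahedron {a b n x y z : ℝ} (hn : 0 < n) (hz : 0 ≤ z)
    (hx : z * a ≤ n * x) (hy : z * b ≤ n * y) (hxy : n * (x + y) ≤ z * (a + b) + n - z) :
    ![x, y, z] ∈ convexHull ℝ {![0, 0, 0], ![1, 0, 0], ![0, 1, 0], ![a, b, n]} := by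
  set vertex : Fin 4 → Fin 3 → ℝ := ![![0, 0, 0], ![1, 0, 0], ![0, 1, 0], ![a, b, n]]
  set weight : Fin 4 → ℝ :=
    ![(n * (1 - x - y) + z * (a + b - 1)) / n, (n * x - z * a) / n, (n * y - z * b) / n, z / n]
  have hweight : ∀ i ∈ Finset.univ, 0 ≤ weight i := by
    intro i _
    fin_cases i <;> refine div_nonneg ?_ hn.le <;> linarith
  have hsum : ∑ i, weight i = 1 := by
    simp only [weight, Fin.sum_univ_four, Matrix.cons_val_zero, Matrix.cons_val_one,
      Matrix.cons_val]
    field_simp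
    ring
  have hvertex : ∀ i ∈ Finset.univ, vertex i ∈ convexHull ℝ
      {![0, 0, 0], ![1, 0, 0], ![0, 1, 0], ![a, b, n]} := by
    intro i _
    apply subset_convexHull
    fin_cases i <;> simp [vertex]
  convert (convex_convexHull ℝ _).sum_mem hweight hsum hvertex using 1
  funext i
  simp only [Finset.sum_apply, Pi.smul_apply, smul_eq_mul, Fin.sum_univ_four, weight, vertex]
  fin_cases i <;> simp only [Fin.reduceFinMk, Fin.zero_eta, Fin.mk_one, Matrix.cons_val,
    Matrix.cons_val_zero, Matrix.cons_val_one] <;> field_simp <;> ring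

def tetrahedron (a b n : ℤ) : Set (Fin 3 → ℝ) :=
  convexHull ℝ {![0, 0, 0], ![1, 0, 0], ![0, 1, 0], ![(a : ℝ), (b : ℝ), (n : ℝ)]}

theorem sub_lt_neg_emod_add_neg_emod_of_empty {a b n : ℤ}
    (hempty : {p : Fin 3 → ℤ | (fun i => (p i : ℝ)) ∈ tetrahedron a b n} =
      {![0, 0, 0], ![1, 0, 0], ![0, 1, 0], ![a, b, n]})
    {h : ℤ} (h0 : 0 < h) (hn : h < n) :
    n - h < (-(a * h)) % n + (-(b * h)) % n := by
  by_contra! hsmall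
  -- the lattice point `(⌈a h / n⌉, ⌈b h / n⌉, h)`
  set x := -((-(a * h)) / n)
  set y := -((-(b * h)) / n)
  have hnx : n * x = a * h + (-(a * h)) % n := by rw [Int.emod_def]; ring
  have hny : n * y = b * h + (-(b * h)) % n := by rw [Int.emod_def]; ring
  have hr := Int.emod_nonneg (-(a * h)) (by omega : n ≠ 0)
  have hs := Int.emod_nonneg (-(b * h)) (by omega : n ≠ 0)
  have hmem : ![x, y, h] ∈ {p : Fin 3 → ℤ | (fun i => (p i : ℝ)) ∈ tetrahedron a b n} := by
    have hcoe : (fun i => ((![x, y, h] : Fin 3 → ℤ) i : ℝ)) = ![(x : ℝ), y, h] := by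
      funext i; fin_cases i <;> rfl
    rw [Set.mem_ofPred_eq, hcoe]
    apply mem_convexHull_tetrahedron <;> norm_cast <;> linarith
  rw [hempty] at hmem
  simp only [Set.mem_insert_iff, Set.mem_singleton_iff] at hmem
  rcases hmem with heq | heq | heq | heq <;> have hheight := congrFun heq 2 <;>
    simp only [Matrix.cons_val] at hheight <;> omega

theorem emod_add_neg_emod_le (m : ℤ) {n : ℤ} (hn : 0 < n) : m % n + (-m) % n ≤ n := by
  rw [Int.neg_emod]
  split_ifs
  · simpa using (Int.emod_lt_of_pos m hn).le
  · simp [abs_of_pos hn]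

theorem emod_add_emod_mem_Ioc {a b n : ℤ}
    (hgap : ∀ h, 0 < h → h < n → n - h < (-(a * h)) % n + (-(b * h)) % n)
    {k : ℤ} (hk0 : 0 < k) (hkn : k < n) :
    (a * k) % n + (b * k) % n ∈ Set.Ioc k (n + k) := by
  have hlow := hgap (n - k) (by omega) (by omega)
  have hhigh := hgap k hk0 hkn
  have hreflect : ∀ c, (-(c * (n - k))) % n = (c * k) % n := fun c => by
    rw [show -(c * (n - k)) = c * k + n * (-c) by ring, Int.add_mul_emod_self_left]
  rw [hreflect, hreflect] at hlow
  have := emod_add_neg_emod_le (a * k) (by omega : 0 < n)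
  have := emod_add_neg_emod_le (b * k) (by omega : 0 < n)
  constructor <;> omega

theorem ediv_add_ediv_add_ediv_eq {a b n j : ℤ} (hn : 0 < n)
    (hmem : (a * j) % n + (b * j) % n ∈ Set.Ioc j (n + j)) :
    a * j / n + b * j / n + (n - a - b + 1) * j / n = j - 1 := by
  obtain ⟨hlow, hhigh⟩ := hmem
  have ha := Int.mul_ediv_add_emod (a * j) n
  have hb := Int.mul_ediv_add_emod (b * j) n
  have hc : (n - a - b + 1) * j
      = (n + j - (a * j) % n - (b * j) % n) + n * (j - a * j / n - b * j / n - 1) := by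
    linear_combination ha + hb
  have hrem : (n + j - (a * j) % n - (b * j) % n) / n = 0 :=
    Int.ediv_eq_zero_of_lt (by linarith) (by linarith)
  rw [hc, Int.add_mul_ediv_left _ _ hn.ne', hrem]
  ring

theorem beatty_eq_ediv {n : ℤ} (hn : 0 ≤ n) (b k : ℤ) :
    beatty n b k = b * k / n - b * (k - 1) / n := by
  simp only [beatty, Int.floor_div_cast_of_nonneg hn]
  norm_cast

theorem stmt18_general (n a b : ℤ)
    (hempty :
      {p : Fin 3 → ℤ | (fun i => (p i : ℝ)) ∈
          convexHull ℝ ({![0, 0, 0], ![1, 0, 0], ![0, 1, 0],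
            ![(a : ℝ), (b : ℝ), (n : ℝ)]} : Set (Fin 3 → ℝ))} =
        ({![0, 0, 0], ![1, 0, 0], ![0, 1, 0], ![a, b, n]} : Set (Fin 3 → ℤ))) :
    ∀ k : ℤ, 2 ≤ k → k ≤ n - 1 →
      beatty n a k + beatty n b k + beatty n (n - a - b + 1) k = 1 := by
  intro k hk2 hkn
  have hn : 0 < n := by omega
  have hfloor : ∀ j, 0 < j → j < n →
      a * j / n + b * j / n + (n - a - b + 1) * j / n = j - 1 := fun j hj0 hjn =>
    ediv_add_ediv_add_ediv_eq hn <| emod_add_emod_mem_Ioc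
      (fun _ => sub_lt_neg_emod_add_neg_emod_of_empty hempty) hj0 hjn
  have hk := hfloor k (by omega) (by omega)
  have hk' := hfloor (k - 1) (by omega) (by omega)
  simp only [beatty_eq_ediv hn.le]
  linarith

theorem stmt18 (n a b : ℤ) (hn : 2 ≤ n) (ha0 : 0 ≤ a) (ha1 : a ≤ n - 1)
    (hb0 : 0 ≤ b) (hb1 : b ≤ n - 1)
    (hempty :
      {p : Fin 3 → ℤ | (fun i => (p i : ℝ)) ∈
          convexHull ℝ ({![0, 0, 0], ![1, 0, 0], ![0, 1, 0],
            ![(a : ℝ), (b : ℝ), (n : ℝ)]} : Set (Fin 3 → ℝ))} =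
        ({![0, 0, 0], ![1, 0, 0], ![0, 1, 0], ![a, b, n]} : Set (Fin 3 → ℤ))) :
    ∀ k : ℤ, 2 ≤ k → k ≤ n - 1 →
      beatty n a k + beatty n b k + beatty n (n - a - b + 1) k = 1 :=
  stmt18_general n a b hempty
end
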